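/- arXiv:2104.14099 — 2 statements merged into one kernel-verified Lean document; each statement's English description precedes it below -/
import Mathlib

section
/- Let A be a Poisson algebra over a field k of characteristic 0, let (M, ·, {-,-}_M) be a Poisson module over A, and let ν be a Poisson derivation of A. Define a new bracket {m, a}_{M^ν} := {m, a}_M + m·ν(a) for m ∈ M, a ∈ A. Then (M, ·, {-,-}_{M^ν}) is again a Poisson module over A, i.e. all four Poisson module axioms hold for the twisted bracket: (2') {{m, a}_{M^ν}, b}_{M^ν} − {{m, b}_{M^ν}, a}_{M^ν} = {m, {a, b}}_{M^ν}; (3') {m·a, b}_{M^ν} = m·{a, b} + {m, b}_{M^ν}·a; (4') {m, ab}_{M^ν} = {m, a}_{M^ν}·b + {m, b}_{M^ν}·a. -/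
/-!
STATEMENT 1: Twisting a Poisson module by a Poisson derivation `ν`, via
`{m, a}_{M^ν} := {m, a}_M + m·ν(a)`, again gives a Poisson module.
-/

theorem twisted_poisson_module
    {k A M : Type*} [Field k] [CharZero k] [CommRing A] [Algebra k A]
    [AddCommGroup M] [Module k M] [Module A M] [IsScalarTower k A M]
    -- the Poisson bracket on `A`
    (br : A →ₗ[k] A →ₗ[k] A)
    (hanti : ∀ a b : A, br a b = - br b a)
    (hjacobi : ∀ a b c : A, br a (br b c) = br (br a b) c + br b (br a c))
    (hleibniz : ∀ a b c : A, br a (b * c) = br a b * c + b * br a c)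
    -- the Poisson module bracket `{-,-}_M : M ⊗ A → M` (the module structure is `a • m`)
    (bm : M →ₗ[k] A →ₗ[k] M)
    -- (2) `(M, {-,-}_M)` is a module over the Lie algebra `(A, {-,-})`
    (hbm2 : ∀ (m : M) (a b : A), bm (bm m a) b - bm (bm m b) a = bm m (br a b))
    -- (3) `{m·a, b}_M = m·{a,b} + {m,b}_M·a`
    (hbm3 : ∀ (m : M) (a b : A), bm (a • m) b = br a b • m + a • bm m b)
    -- (4) `{m, ab}_M = {m,a}_M·b + {m,b}_M·a`
    (hbm4 : ∀ (m : M) (a b : A), bm m (a * b) = b • bm m a + a • bm m b)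
    -- `ν` is a Poisson derivation of `A`
    (ν : A →ₗ[k] A)
    (hνder : ∀ a b : A, ν (a * b) = ν a * b + a * ν b)
    (hνbr : ∀ a b : A, ν (br a b) = br (ν a) b + br a (ν b)) :
    -- the twisted bracket `{m, a}_{M^ν} := {m, a}_M + ν(a) • m` again satisfies the
    -- Poisson module axioms:
    -- (2')
    (∀ (m : M) (a b : A),
        ((bm (bm m a + ν a • m) b + ν b • (bm m a + ν a • m)) -
          (bm (bm m b + ν b • m) a + ν a • (bm m b + ν b • m)))
          = bm m (br a b) + ν (br a b) • m) ∧
    -- (3')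
    (∀ (m : M) (a b : A),
        bm (a • m) b + ν b • (a • m) = br a b • m + a • (bm m b + ν b • m)) ∧
    -- (4')
    (∀ (m : M) (a b : A),
        bm m (a * b) + ν (a * b) • m
          = b • (bm m a + ν a • m) + a • (bm m b + ν b • m)) := by
  
  refine ⟨?_, ?_, ?_⟩
  · intro m a b
    rw [map_add, LinearMap.add_apply, map_add, LinearMap.add_apply, hbm3, hbm3,
      smul_add, smul_add, hνbr, hanti (ν b) a, ← hbm2]
    module
  · intro m a b
    rw [hbm3]
    module
  · intro m a b
    rw [hbm4, hνder]
    module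
end

section
/- Let A be a Poisson algebra over a field k of characteristic 0 and ν a Poisson derivation of A. Write Ω^p := ⋀^p_A Ω_{A/k}, let ∂_ν be the twisted Koszul–Brylinski boundary and let d : Ω^p → Ω^{p+1} be k-linear maps with d(f₀ df₁ ∧ ⋯ ∧ df_p) = df₀ ∧ df₁ ∧ ⋯ ∧ df_p. Suppose f₀, f₁, …, f_n ∈ A are eigenvectors of ν, say ν(f_i) = λ_i f_i with λ_i ∈ k. Then (∂_ν ∘ d + d ∘ ∂_ν)(f₀ df₁ ∧ ⋯ ∧ df_n) = (λ₀ + λ₁ + ⋯ + λ_n) · f₀ df₁ ∧ ⋯ ∧ df_n. In particular, if λ₀ + ⋯ + λ_n = 0 then ∂_ν and d anticommute on f₀ df₁ ∧ ⋯ ∧ df_n, so the zero-weight part of the twisted Poisson chain complex is a mixed complex. -/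
/-!
`∂_ν` and `d` satisfy a Cartan formula `∂_ν d + d ∂_ν = L_ν` on generators, where
`L_ν (f₀ df₁ ∧ ⋯ ∧ df_p) = ν(f₀) df₁ ∧ ⋯ ∧ df_p + ∑ᵢ f₀ df₁ ∧ ⋯ ∧ dν(fᵢ) ∧ ⋯ ∧ df_p` is the Lie
derivative along `ν`. Since `d (f₀ df) = 1 · df₀ ∧ df` and `{1, -} = 0`, the terms of `∂_ν d`
carrying a bracket `d{fᵢ, fⱼ}` or `d{f₀, fᵢ}` cancel against those of `d ∂_ν` after moving `df₀`
to the front, and so do the terms `ν(fᵢ) df₀ ∧ ⋯` produced by the Leibniz rule for `d(f₀ ν(fᵢ))`.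
On eigenvectors `dν(fᵢ) = λᵢ dfᵢ`, so `L_ν` acts by `λ₀ + ⋯ + λₙ`.
-/

def consSkip2 {α : Type*} {n : ℕ} (x : α) (i j : Fin (n + 1)) (v : Fin (n + 1) → α) :
    Fin n → α :=
  fun t => if t.val = 0 then x
    else v ⟨if t.val - 1 < i.val then t.val - 1
            else if t.val < j.val then t.val else t.val + 1,
          by have ht := t.isLt; split_ifs <;> omega⟩

noncomputable def wedgeOfForms (k A : Type*) [CommRing k] [CommRing A] [Algebra k A]
    (p : ℕ) (ω : Fin p → Ω[A⁄k]) : ⋀[A]^p (Ω[A⁄k]) :=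
  ⟨ExteriorAlgebra.ιMulti A p ω, ExteriorAlgebra.ιMulti_range A p ⟨ω, rfl⟩⟩

/-- The generator `f₀ df₁ ∧ ⋯ ∧ df_p` of `⋀^p_A Ω_{A/k}`. -/
noncomputable def genForm (k A : Type*) [CommRing k] [CommRing A] [Algebra k A]
    (p : ℕ) (f₀ : A) (f : Fin p → A) : ⋀[A]^p (Ω[A⁄k]) :=
  f₀ • wedgeOfForms k A p (fun i => KaehlerDifferential.D k A (f i))

/-- The defining formula of the twisted Koszul–Brylinski boundary `∂_ν : Ω^{p+1} → Ω^p`. -/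
def IsTwistedKBBoundary (k A : Type*) [CommRing k] [CommRing A] [Algebra k A]
    (br : A → A → A) (ν : A → A) (p : ℕ)
    (bd : (⋀[A]^(p + 1) (Ω[A⁄k])) →+ ⋀[A]^p (Ω[A⁄k])) : Prop :=
  ∀ (f₀ : A) (f : Fin (p + 1) → A),
    bd (genForm k A (p + 1) f₀ f) =
      (∑ i : Fin (p + 1), (-1 : ℤ) ^ (i : ℕ) •
          ((br f₀ (f i) + f₀ * ν (f i)) •
            wedgeOfForms k A p (fun t => KaehlerDifferential.D k A (f (i.succAbove t)))))
      + ∑ i : Fin (p + 1), ∑ j : Fin (p + 1),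
          if i < j then
            (-1 : ℤ) ^ ((i : ℕ) + (j : ℕ)) •
              (f₀ • wedgeOfForms k A p
                (consSkip2 (KaehlerDifferential.D k A (br (f i) (f j))) i j
                  (fun s => KaehlerDifferential.D k A (f s))))
          else 0

/-- The defining formula of the de Rham differential `d : Ω^p → Ω^{p+1}`. -/
def IsDeRhamDiff (k A : Type*) [CommRing k] [CommRing A] [Algebra k A] (p : ℕ)
    (d : (⋀[A]^p (Ω[A⁄k])) →+ ⋀[A]^(p + 1) (Ω[A⁄k])) : Prop :=
  ∀ (f₀ : A) (f : Fin p → A),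
    d (genForm k A p f₀ f) =
      wedgeOfForms k A (p + 1)
        (Fin.cons (KaehlerDifferential.D k A f₀) (fun i => KaehlerDifferential.D k A (f i)))

section Wedge

variable {k A : Type*} [CommRing k] [CommRing A] [Algebra k A] {p : ℕ}

lemma wedgeOfForms_eq_ιMulti (ω : Fin p → Ω[A⁄k]) :
    wedgeOfForms k A p ω = exteriorPower.ιMulti A p ω := rfl

lemma wedgeOfForms_comp_swap (ω : Fin p → Ω[A⁄k]) {a b : Fin p} (h : a ≠ b) :
    wedgeOfForms k A p (ω ∘ Equiv.swap a b) = -wedgeOfForms k A p ω := by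
  simp only [wedgeOfForms_eq_ιMulti]
  exact AlternatingMap.map_swap _ _ h

lemma wedgeOfForms_cons_add (x y : Ω[A⁄k]) (w : Fin p → Ω[A⁄k]) :
    wedgeOfForms k A (p + 1) (Fin.cons (x + y) w) =
      wedgeOfForms k A (p + 1) (Fin.cons x w) + wedgeOfForms k A (p + 1) (Fin.cons y w) :=
  (exteriorPower.ιMulti A (p + 1)).toMultilinearMap.cons_add w x y

lemma wedgeOfForms_cons_smul (c : A) (x : Ω[A⁄k]) (w : Fin p → Ω[A⁄k]) :
    wedgeOfForms k A (p + 1) (Fin.cons (c • x) w) = c • wedgeOfForms k A (p + 1) (Fin.cons x w) :=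
  (exteriorPower.ιMulti A (p + 1)).toMultilinearMap.cons_smul w c x

lemma wedgeOfForms_insertNth (i : Fin (p + 1)) (x : Ω[A⁄k]) (w : Fin p → Ω[A⁄k]) :
    wedgeOfForms k A (p + 1) (i.insertNth x w) =
      (-1 : ℤ) ^ (i : ℕ) • wedgeOfForms k A (p + 1) (Fin.cons x w) := by
  have hperm : i.insertNth x w = Fin.cons x w ∘ i.cycleRange := by
    funext t
    refine Fin.succAboveCases i ?_ (fun s => ?_) t <;>
      simp [Fin.cycleRange_self, Fin.cycleRange_succAbove]
  rw [wedgeOfForms_eq_ιMulti, hperm, AlternatingMap.map_perm, Fin.sign_cycleRange,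
    Units.smul_def]
  push_cast
  rfl

lemma wedgeOfForms_update (v : Fin (p + 1) → Ω[A⁄k]) (i : Fin (p + 1)) (x : Ω[A⁄k]) :
    wedgeOfForms k A (p + 1) (Function.update v i x) =
      (-1 : ℤ) ^ (i : ℕ) • wedgeOfForms k A (p + 1) (Fin.cons x (i.removeNth v)) := by
  rw [← Fin.insertNth_removeNth, wedgeOfForms_insertNth]

end Wedge

section FinTuple

variable {α β : Type*} {n : ℕ}

lemma consSkip2_map (F : α → β) (x : α) (i j : Fin (n + 1)) (v : Fin (n + 1) → α) :
    consSkip2 (F x) i j (fun s => F (v s)) = fun t => F (consSkip2 x i j v t) := by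
  funext t
  simp only [consSkip2]
  split <;> rfl

lemma consSkip2_succ (x : α) (i j : Fin (n + 2)) (v : Fin (n + 2) → α) (s : Fin n) :
    consSkip2 x i j v s.succ =
      v ⟨if s < i.val then s else if s + 1 < j.val then s + 1 else s + 2, by
        split_ifs <;> omega⟩ := by
  simp [consSkip2]

lemma cons_apply_of_val_eq_succ (y : α) (v : Fin (n + 1) → α) {u : Fin (n + 2)} {w : Fin (n + 1)}
    (h : (u : ℕ) = w + 1) : (Fin.cons y v : Fin (n + 2) → α) u = v w := by
  obtain rfl : u = w.succ := Fin.ext h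
  rfl

lemma consSkip2_zero_succ (x y : α) (j : Fin (n + 1)) (v : Fin (n + 1) → α) :
    consSkip2 x 0 j.succ (Fin.cons y v) = Fin.cons x (j.removeNth v) := by
  funext t
  refine Fin.cases rfl (fun s => ?_) t
  rw [consSkip2_succ, Fin.cons_succ, Fin.removeNth_apply]
  apply cons_apply_of_val_eq_succ
  simp only [Fin.succAbove, Fin.lt_def, Fin.val_castSucc, Fin.val_succ, Fin.val_zero,
    apply_ite Fin.val, Nat.not_lt_zero, if_false, Nat.add_lt_add_iff_right]
  split_ifs <;> omega

lemma consSkip2_succ_succ (x y : α) {i j : Fin (n + 1)} (hij : i < j) (v : Fin (n + 1) → α) :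
    consSkip2 x i.succ j.succ (Fin.cons y v) =
      Fin.cons y (consSkip2 x i j v) ∘ Equiv.swap 0 1 := by
  obtain ⟨m, rfl⟩ : ∃ m, n = m + 1 := ⟨n - 1, by have := j.isLt; rw [Fin.lt_def] at hij; omega⟩
  funext t
  refine Fin.cases ?_ (fun u => Fin.cases ?_ (fun s => ?_) u) t
  · rfl
  · rw [Function.comp_apply, consSkip2_succ, Fin.succ_zero_eq_one, Equiv.swap_apply_right,
      Fin.cons_zero]
    simp only [Fin.val_zero, Fin.val_succ, Nat.zero_lt_succ, if_true]
    rfl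
  · rw [Function.comp_apply,
      Equiv.swap_apply_of_ne_of_ne (Fin.succ_ne_zero _) (Fin.succ_succ_ne_one _), Fin.cons_succ]
    rw [consSkip2_succ, consSkip2_succ]
    apply cons_apply_of_val_eq_succ
    simp only [Fin.val_succ, Nat.add_lt_add_iff_right]
    split_ifs <;> omega

lemma comp_cons_succ_succAbove (F : α → β) (x : α) (v : Fin (n + 1) → α)
    (i : Fin (n + 1)) :
    (fun t => F ((Fin.cons x v : Fin (n + 2) → α) (i.succ.succAbove t))) =
      Fin.cons (F x) (i.removeNth (fun s => F (v s))) := by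
  rw [← Fin.cons_comp_succ_succAbove]
  funext t
  exact congrFun (Fin.comp_cons F x v) _

end FinTuple

section Cartan

open KaehlerDifferential

noncomputable def lieDerivGenForm (k A : Type*) [CommRing k] [CommRing A] [Algebra k A]
    (ν : A → A) (p : ℕ) (f₀ : A) (f : Fin p → A) : ⋀[A]^p (Ω[A⁄k]) :=
  ν f₀ • wedgeOfForms k A p (fun i => D k A (f i)) +
    f₀ • ∑ i, wedgeOfForms k A p (Function.update (fun i => D k A (f i)) i (D k A (ν (f i))))

variable {k A : Type*} [CommRing k] [CommRing A] [Algebra k A]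

lemma lieDerivGenForm_of_eigen {ν : A → A} {p : ℕ} {f₀ : A} {f : Fin p → A} {lam₀ : k}
    {lam : Fin p → k} (hf₀ : ν f₀ = algebraMap k A lam₀ * f₀)
    (hf : ∀ i, ν (f i) = algebraMap k A (lam i) * f i) :
    lieDerivGenForm k A ν p f₀ f = algebraMap k A (lam₀ + ∑ i, lam i) • genForm k A p f₀ f := by
  have hterm : ∀ i, wedgeOfForms k A p (Function.update (fun i => D k A (f i)) i (D k A (ν (f i))))
      = algebraMap k A (lam i) • wedgeOfForms k A p (fun i => D k A (f i)) := by
    intro i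
    rw [hf, ← Algebra.smul_def, Derivation.map_smul, ← algebraMap_smul A, wedgeOfForms_eq_ιMulti,
      AlternatingMap.map_update_smul, Function.update_eq_self]
    rfl
  simp only [lieDerivGenForm, genForm, hterm, ← Finset.sum_smul, ← map_sum, hf₀, smul_smul,
    map_add, add_mul, add_smul]
  rw [mul_comm f₀]

lemma one_bracket_eq_zero {br : A → A → A} (hanti : ∀ a b, br a b = -br b a)
    (hleibniz : ∀ a b c, br a (b * c) = br a b * c + b * br a c) (a : A) : br 1 a = 0 := by
  have h := hleibniz a 1 1
  rw [mul_one, mul_one, one_mul, left_eq_add] at h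
  rw [hanti, h, neg_zero]

lemma IsDeRhamDiff.apply_genForm {p : ℕ} {d : (⋀[A]^p (Ω[A⁄k])) →+ ⋀[A]^(p + 1) (Ω[A⁄k])}
    (hd : IsDeRhamDiff k A p d) (f₀ : A) (f : Fin p → A) :
    d (genForm k A p f₀ f) = genForm k A (p + 1) 1 (Fin.cons f₀ f) := by
  rw [hd, genForm, one_smul]
  exact congrArg _ (Fin.comp_cons _ _ _).symm

lemma wedgeOfForms_cons_D_add_mul {p : ℕ} (b f₀ g : A) (w : Fin p → Ω[A⁄k]) :
    wedgeOfForms k A (p + 1) (Fin.cons (D k A (b + f₀ * g)) w) =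
      wedgeOfForms k A (p + 1) (Fin.cons (D k A b) w) +
        g • wedgeOfForms k A (p + 1) (Fin.cons (D k A f₀) w) +
        f₀ • wedgeOfForms k A (p + 1) (Fin.cons (D k A g) w) := by
  rw [map_add, Derivation.leibniz, wedgeOfForms_cons_add, wedgeOfForms_cons_add,
    wedgeOfForms_cons_smul, wedgeOfForms_cons_smul, add_assoc, add_comm (f₀ • _)]

variable {br : A → A → A} {ν : A → A} {p : ℕ}

lemma IsTwistedKBBoundary.deRham_comp_apply_genForm
    {bd : (⋀[A]^(p + 1) (Ω[A⁄k])) →+ ⋀[A]^p (Ω[A⁄k])}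
    {d : (⋀[A]^p (Ω[A⁄k])) →+ ⋀[A]^(p + 1) (Ω[A⁄k])}
    (hbd : IsTwistedKBBoundary k A br ν p bd) (hd : IsDeRhamDiff k A p d)
    (f₀ : A) (f : Fin (p + 1) → A) :
    d (bd (genForm k A (p + 1) f₀ f)) =
      (∑ i : Fin (p + 1), (-1 : ℤ) ^ (i : ℕ) • wedgeOfForms k A (p + 1)
          (Fin.cons (D k A (br f₀ (f i) + f₀ * ν (f i))) (i.removeNth (fun s => D k A (f s)))))
      + ∑ i : Fin (p + 1), ∑ j : Fin (p + 1),
          if i < j then (-1 : ℤ) ^ ((i : ℕ) + (j : ℕ)) • wedgeOfForms k A (p + 1)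
            (Fin.cons (D k A f₀) (consSkip2 (D k A (br (f i) (f j))) i j (fun s => D k A (f s))))
          else 0 := by
  rw [hbd, map_add, map_sum, map_sum]
  congr 1
  · refine Finset.sum_congr rfl fun i _ => ?_
    rw [map_zsmul]
    exact congrArg _ (hd _ (i.removeNth f))
  · refine Finset.sum_congr rfl fun i _ => ?_
    rw [map_sum]
    refine Finset.sum_congr rfl fun j _ => ?_
    split_ifs
    · rw [map_zsmul, consSkip2_map (D k A)]
      exact congrArg _ (hd f₀ _)
    · exact map_zero d

lemma sum_sign_smul_wedgeOfForms_succAbove_cons (f₀ : A) (f : Fin (p + 1) → A) :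
    ∑ x : Fin (p + 2), (-1 : ℤ) ^ (x : ℕ) • (ν ((Fin.cons f₀ f : Fin (p + 2) → A) x) •
      wedgeOfForms k A (p + 1)
        (fun t => D k A ((Fin.cons f₀ f : Fin (p + 2) → A) (x.succAbove t)))) =
      ν f₀ • wedgeOfForms k A (p + 1) (fun s => D k A (f s)) -
        ∑ i : Fin (p + 1), (-1 : ℤ) ^ (i : ℕ) • ν (f i) • wedgeOfForms k A (p + 1)
          (Fin.cons (D k A f₀) (i.removeNth (fun s => D k A (f s)))) := by
  rw [Fin.sum_univ_succ, sub_eq_add_neg, ← Finset.sum_neg_distrib]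
  simp only [Fin.cons_zero, Fin.cons_succ, Fin.succAbove_zero, Fin.val_zero, pow_zero, one_smul,
    comp_cons_succ_succAbove, Fin.val_succ, pow_succ, mul_neg_one, neg_smul]

lemma sum_sign_smul_wedgeOfForms_consSkip2_cons (f₀ : A) (f : Fin (p + 1) → A) :
    (∑ x : Fin (p + 2), ∑ y : Fin (p + 2), if x < y then
      (-1 : ℤ) ^ ((x : ℕ) + (y : ℕ)) • wedgeOfForms k A (p + 1)
        (consSkip2 (D k A (br ((Fin.cons f₀ f : Fin (p + 2) → A) x)
          ((Fin.cons f₀ f : Fin (p + 2) → A) y))) x y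
          (fun s => D k A ((Fin.cons f₀ f : Fin (p + 2) → A) s))) else 0) =
      -(∑ i : Fin (p + 1), (-1 : ℤ) ^ (i : ℕ) • wedgeOfForms k A (p + 1)
          (Fin.cons (D k A (br f₀ (f i))) (i.removeNth (fun s => D k A (f s))))) -
        ∑ i : Fin (p + 1), ∑ j : Fin (p + 1),
          if i < j then (-1 : ℤ) ^ ((i : ℕ) + (j : ℕ)) • wedgeOfForms k A (p + 1)
            (Fin.cons (D k A f₀) (consSkip2 (D k A (br (f i) (f j))) i j (fun s => D k A (f s))))
          else 0 := by
  have hDcons : (fun s => D k A ((Fin.cons f₀ f : Fin (p + 2) → A) s)) =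
      Fin.cons (D k A f₀) (fun s => D k A (f s)) :=
    Fin.comp_cons _ _ _
  have hsign : ∀ a b : ℕ, (-1 : ℤ) ^ (a + 1 + (b + 1)) = (-1) ^ (a + b) := fun a b => by
    rw [show a + 1 + (b + 1) = a + b + 2 by omega, pow_add, neg_one_sq, mul_one]
  rw [hDcons, Fin.sum_univ_succ, sub_eq_add_neg, ← Finset.sum_neg_distrib,
    ← Finset.sum_neg_distrib]
  congr 1
  · rw [Fin.sum_univ_succ, if_neg (lt_irrefl _), zero_add]
    refine Finset.sum_congr rfl fun j _ => ?_
    rw [if_pos (Fin.succ_pos j), consSkip2_zero_succ]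
    simp only [Fin.cons_zero, Fin.cons_succ, Fin.val_zero, Fin.val_succ, zero_add, pow_succ,
      mul_neg_one, neg_smul]
  · refine Finset.sum_congr rfl fun i _ => ?_
    rw [Fin.sum_univ_succ, if_neg (Fin.not_lt_zero _), zero_add, ← Finset.sum_neg_distrib]
    refine Finset.sum_congr rfl fun j _ => ?_
    by_cases hij : i < j
    · have : NeZero p := ⟨by rintro rfl; exact hij.ne (Subsingleton.elim (α := Fin 1) i j)⟩
      rw [if_pos (Fin.succ_lt_succ_iff.mpr hij), if_pos hij, consSkip2_succ_succ _ _ hij,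
        wedgeOfForms_comp_swap _ Fin.zero_ne_one']
      simp only [Fin.cons_succ, Fin.val_succ, hsign, smul_neg]
    · rw [if_neg (mt Fin.succ_lt_succ_iff.mp hij), if_neg hij, neg_zero]

lemma IsTwistedKBBoundary.apply_genForm_one_cons
    {bd : (⋀[A]^(p + 2) (Ω[A⁄k])) →+ ⋀[A]^(p + 1) (Ω[A⁄k])}
    (hbd : IsTwistedKBBoundary k A br ν (p + 1) bd) (hbr : ∀ a, br 1 a = 0)
    (f₀ : A) (f : Fin (p + 1) → A) :
    bd (genForm k A (p + 2) 1 (Fin.cons f₀ f)) =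
      ν f₀ • wedgeOfForms k A (p + 1) (fun s => D k A (f s))
      - (∑ i : Fin (p + 1), (-1 : ℤ) ^ (i : ℕ) •
          (wedgeOfForms k A (p + 1)
              (Fin.cons (D k A (br f₀ (f i))) (i.removeNth (fun s => D k A (f s)))) +
            ν (f i) • wedgeOfForms k A (p + 1)
              (Fin.cons (D k A f₀) (i.removeNth (fun s => D k A (f s))))))
      - ∑ i : Fin (p + 1), ∑ j : Fin (p + 1),
          if i < j then (-1 : ℤ) ^ ((i : ℕ) + (j : ℕ)) • wedgeOfForms k A (p + 1)
            (Fin.cons (D k A f₀) (consSkip2 (D k A (br (f i) (f j))) i j (fun s => D k A (f s))))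
          else 0 := by
  rw [hbd]
  simp only [hbr, zero_add, one_mul, one_smul]
  rw [sum_sign_smul_wedgeOfForms_succAbove_cons, sum_sign_smul_wedgeOfForms_consSkip2_cons,
    Finset.sum_congr rfl fun i _ => smul_add _ _ _, Finset.sum_add_distrib]
  abel

theorem boundary_deRham_add_deRham_boundary_genForm (hbr : ∀ a, br 1 a = 0)
    {bd₀ : (⋀[A]^(p + 1) (Ω[A⁄k])) →+ ⋀[A]^p (Ω[A⁄k])}
    {bd₁ : (⋀[A]^(p + 2) (Ω[A⁄k])) →+ ⋀[A]^(p + 1) (Ω[A⁄k])}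
    {d₀ : (⋀[A]^p (Ω[A⁄k])) →+ ⋀[A]^(p + 1) (Ω[A⁄k])}
    {d₁ : (⋀[A]^(p + 1) (Ω[A⁄k])) →+ ⋀[A]^(p + 2) (Ω[A⁄k])}
    (hbd₀ : IsTwistedKBBoundary k A br ν p bd₀) (hbd₁ : IsTwistedKBBoundary k A br ν (p + 1) bd₁)
    (hd₀ : IsDeRhamDiff k A p d₀) (hd₁ : IsDeRhamDiff k A (p + 1) d₁)
    (f₀ : A) (f : Fin (p + 1) → A) :
    bd₁ (d₁ (genForm k A (p + 1) f₀ f)) + d₀ (bd₀ (genForm k A (p + 1) f₀ f)) =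
      lieDerivGenForm k A ν (p + 1) f₀ f := by
  rw [hd₁.apply_genForm, hbd₁.apply_genForm_one_cons hbr, hbd₀.deRham_comp_apply_genForm hd₀]
  simp only [lieDerivGenForm, wedgeOfForms_update, wedgeOfForms_cons_D_add_mul, smul_add,
    Finset.sum_add_distrib, Finset.smul_sum, smul_comm f₀]
  abel

theorem boundary_deRham_genForm_zero (hbr : ∀ a, br 1 a = 0)
    {bd : (⋀[A]^1 (Ω[A⁄k])) →+ ⋀[A]^0 (Ω[A⁄k])} {d : (⋀[A]^0 (Ω[A⁄k])) →+ ⋀[A]^1 (Ω[A⁄k])}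
    (hbd : IsTwistedKBBoundary k A br ν 0 bd) (hd : IsDeRhamDiff k A 0 d)
    (f₀ : A) (f : Fin 0 → A) :
    bd (d (genForm k A 0 f₀ f)) = lieDerivGenForm k A ν 0 f₀ f := by
  rw [hd.apply_genForm, hbd]
  simp [lieDerivGenForm, hbr]

end Cartan

theorem eigenweight_homotopy_general
    {k A : Type*} [Field k] [CommRing A] [Algebra k A]
    (br : A →ₗ[k] A →ₗ[k] A)
    (hanti : ∀ a b : A, br a b = - br b a)
    (hleibniz : ∀ a b c : A, br a (b * c) = br a b * c + b * br a c)
    (ν : A →ₗ[k] A) :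
    -- on `f₀ df₁ ∧ ⋯ ∧ df_{p+1}` (the forms of degree ≥ 1) …
    (∀ (p : ℕ)
        (bd₀ : (⋀[A]^(p + 1) (Ω[A⁄k])) →+ ⋀[A]^p (Ω[A⁄k]))
        (bd₁ : (⋀[A]^(p + 2) (Ω[A⁄k])) →+ ⋀[A]^(p + 1) (Ω[A⁄k]))
        (d₀ : (⋀[A]^p (Ω[A⁄k])) →+ ⋀[A]^(p + 1) (Ω[A⁄k]))
        (d₁ : (⋀[A]^(p + 1) (Ω[A⁄k])) →+ ⋀[A]^(p + 2) (Ω[A⁄k])),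
        IsTwistedKBBoundary k A (fun a b => br a b) (fun a => ν a) p bd₀ →
        IsTwistedKBBoundary k A (fun a b => br a b) (fun a => ν a) (p + 1) bd₁ →
        IsDeRhamDiff k A p d₀ → IsDeRhamDiff k A (p + 1) d₁ →
        ∀ (f₀ : A) (f : Fin (p + 1) → A) (lam₀ : k) (lam : Fin (p + 1) → k),
          ν f₀ = algebraMap k A lam₀ * f₀ →
          (∀ i, ν (f i) = algebraMap k A (lam i) * f i) →
          bd₁ (d₁ (genForm k A (p + 1) f₀ f)) + d₀ (bd₀ (genForm k A (p + 1) f₀ f))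
            = algebraMap k A (lam₀ + ∑ i, lam i) • genForm k A (p + 1) f₀ f) ∧
    -- … and in degree 0, where `∂_ν` vanishes:
    (∀ (bd₀ : (⋀[A]^1 (Ω[A⁄k])) →+ ⋀[A]^0 (Ω[A⁄k]))
        (d₀ : (⋀[A]^0 (Ω[A⁄k])) →+ ⋀[A]^1 (Ω[A⁄k])),
        IsTwistedKBBoundary k A (fun a b => br a b) (fun a => ν a) 0 bd₀ →
        IsDeRhamDiff k A 0 d₀ →
        ∀ (f₀ : A) (lam₀ : k), ν f₀ = algebraMap k A lam₀ * f₀ →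
          bd₀ (d₀ (genForm k A 0 f₀ (fun i => i.elim0)))
            = algebraMap k A lam₀ • genForm k A 0 f₀ (fun i => i.elim0)) := by
  have hbr : ∀ a, br 1 a = 0 := one_bracket_eq_zero (br := fun a b => br a b) hanti hleibniz
  refine ⟨fun p bd₀ bd₁ d₀ d₁ hbd₀ hbd₁ hd₀ hd₁ f₀ f lam₀ lam hf₀ hf => ?_,
    fun bd₀ d₀ hbd₀ hd₀ f₀ lam₀ hf₀ => ?_⟩
  · rw [boundary_deRham_add_deRham_boundary_genForm hbr hbd₀ hbd₁ hd₀ hd₁, lieDerivGenForm_of_eigen hf₀ hf]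
  · rw [boundary_deRham_genForm_zero hbr hbd₀ hd₀,
      lieDerivGenForm_of_eigen (lam := fun i => i.elim0) hf₀ (fun i => i.elim0),
      Fin.sum_univ_zero, add_zero]

theorem eigenweight_homotopy
    {k A : Type*} [Field k] [CharZero k] [CommRing A] [Algebra k A]
    (br : A →ₗ[k] A →ₗ[k] A)
    (hanti : ∀ a b : A, br a b = - br b a)
    (hjacobi : ∀ a b c : A, br a (br b c) = br (br a b) c + br b (br a c))
    (hleibniz : ∀ a b c : A, br a (b * c) = br a b * c + b * br a c)
    (ν : A →ₗ[k] A)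
    (hνder : ∀ a b : A, ν (a * b) = ν a * b + a * ν b)
    (hνbr : ∀ a b : A, ν (br a b) = br (ν a) b + br a (ν b)) :
    -- on `f₀ df₁ ∧ ⋯ ∧ df_{p+1}` (the forms of degree ≥ 1) …
    (∀ (p : ℕ)
        (bd₀ : (⋀[A]^(p + 1) (Ω[A⁄k])) →+ ⋀[A]^p (Ω[A⁄k]))
        (bd₁ : (⋀[A]^(p + 2) (Ω[A⁄k])) →+ ⋀[A]^(p + 1) (Ω[A⁄k]))
        (d₀ : (⋀[A]^p (Ω[A⁄k])) →+ ⋀[A]^(p + 1) (Ω[A⁄k]))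
        (d₁ : (⋀[A]^(p + 1) (Ω[A⁄k])) →+ ⋀[A]^(p + 2) (Ω[A⁄k])),
        IsTwistedKBBoundary k A (fun a b => br a b) (fun a => ν a) p bd₀ →
        IsTwistedKBBoundary k A (fun a b => br a b) (fun a => ν a) (p + 1) bd₁ →
        IsDeRhamDiff k A p d₀ → IsDeRhamDiff k A (p + 1) d₁ →
        ∀ (f₀ : A) (f : Fin (p + 1) → A) (lam₀ : k) (lam : Fin (p + 1) → k),
          ν f₀ = algebraMap k A lam₀ * f₀ →
          (∀ i, ν (f i) = algebraMap k A (lam i) * f i) →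
          bd₁ (d₁ (genForm k A (p + 1) f₀ f)) + d₀ (bd₀ (genForm k A (p + 1) f₀ f))
            = algebraMap k A (lam₀ + ∑ i, lam i) • genForm k A (p + 1) f₀ f) ∧
    -- … and in degree 0, where `∂_ν` vanishes:
    (∀ (bd₀ : (⋀[A]^1 (Ω[A⁄k])) →+ ⋀[A]^0 (Ω[A⁄k]))
        (d₀ : (⋀[A]^0 (Ω[A⁄k])) →+ ⋀[A]^1 (Ω[A⁄k])),
        IsTwistedKBBoundary k A (fun a b => br a b) (fun a => ν a) 0 bd₀ →
        IsDeRhamDiff k A 0 d₀ →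
        ∀ (f₀ : A) (lam₀ : k), ν f₀ = algebraMap k A lam₀ * f₀ →
          bd₀ (d₀ (genForm k A 0 f₀ (fun i => i.elim0)))
            = algebraMap k A lam₀ • genForm k A 0 f₀ (fun i => i.elim0)) :=
  eigenweight_homotopy_general br hanti hleibniz ν
end
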